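/- Let a ∈ (0,1/2) and b > 1 + log 2 / log(1/a). Let c : ℕ × ℕ → ℝ and, for m ≥ 1 and 0 ≤ j < 2^{m-1}, define P_{m,j} := {(x,y) ∈ ℝ² : x > a^{-m}, c(m,j) < y < c(m,j) + x^{-b}}; assume 0 ≤ c(m,j) and c(m,j) + a^{mb} ≤ 1 for all such m, j (so each P_{m,j} lies in the strip {0 ≤ y ≤ 1}), and that the sets P_{m,j} are pairwise disjoint. Let Ω := ⋃_{m≥1} ⋃_{0≤j<2^{m-1}} P_{m,j}. Then |Ω| < ∞ and for every s ∈ ℂ with Re s > log 2/log(1/a) - (b+1), ∫_Ω x^{-s-2} d(x,y) = 1 / ( (s+b+1)·(a^{-(s+b+1)} - 2) ), where x^{-s-2} and a^{-(s+b+1)} denote complex powers of positive reals. (Since 0 < y < 1 < a^{-1} < x on Ω, this integral is the Lapidus zeta function of the Cantor-like set Ω_∞^{(a,b)} at infinity with respect to the sup-norm on ℝ² with T = 1, and log 2/log(1/a) - (b+1) equals the upper box dimension of Ω at infinity.) -/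

import Mathlib

/-!
Pushing Lebesgue measure on a region between graphs `f < y < g` forward to the first coordinate
gives the density `g - f`. Hence over the strip `x > A`, `c < y < c + x ^ (-b)` the integral of
`x ^ (-s - 2)` is `∫_A^∞ x ^ (-s - b - 2) dx = A ^ (-(s + b + 1)) / (s + b + 1)`. With
`A = a ^ (-(m + 1))` and `2 ^ m` strips at level `m`, the integral over `Ω` is the geometric series
`∑ 2 ^ m q ^ (m + 1) / (s + b + 1)` with `q = a ^ (s + b + 1)`, which converges exactly when
`2 ‖q‖ < 1`, i.e. `Re s > log 2 / log (1 / a) - (b + 1)`. The same computation for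
`‖x ^ (-s - 2)‖` gives integrability, and `s = -2` gives `|Ω| < ∞`.
-/

open MeasureTheory Set Function

section RegionBetween

variable {α E : Type*} [MeasurableSpace α] {μ : Measure α}
  [NormedAddCommGroup E] [NormedSpace ℝ E] {f g : α → ℝ} {s : Set α}

theorem map_fst_restrict_regionBetween (hf : Measurable f) (hg : Measurable g)
    (hs : MeasurableSet s) :
    ((μ.prod volume).restrict (regionBetween f g s)).map Prod.fst =
      (μ.restrict s).withDensity fun x => ENNReal.ofReal (g x - f x) := by
  ext t ht
  have hslice : Prod.fst ⁻¹' t ∩ regionBetween f g s = regionBetween f g (t ∩ s) := by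
    ext z; simp [regionBetween, and_assoc]
  rw [Measure.map_apply measurable_fst ht, Measure.restrict_apply (measurable_fst ht), hslice,
    volume_regionBetween_eq_lintegral' hf hg (ht.inter hs), withDensity_apply _ ht,
    Measure.restrict_restrict ht]
  rfl

theorem integrableOn_regionBetween_comp_fst_iff (hf : Measurable f) (hg : Measurable g)
    (hs : MeasurableSet s) (hfg : ∀ x ∈ s, f x ≤ g x) {e : α → E}
    (he : AEStronglyMeasurable e (μ.restrict s)) :
    IntegrableOn (fun z => e z.1) (regionBetween f g s) (μ.prod volume) ↔
      IntegrableOn (fun x => (g x - f x) • e x) s μ := by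
  have he' := he.mono_ac (withDensity_absolutelyContinuous _ fun x => ENNReal.ofReal (g x - f x))
  rw [IntegrableOn, ← Function.comp_def, ← integrable_map_measure _ measurable_fst.aemeasurable,
    map_fst_restrict_regionBetween hf hg hs, integrable_withDensity_iff_integrable_smul'
      (by fun_prop) (ae_of_all _ fun _ => ENNReal.ofReal_lt_top)]
  · refine integrable_congr ((ae_restrict_iff' hs).2 (ae_of_all _ fun x hx => ?_))
    simp [ENNReal.toReal_ofReal (sub_nonneg.2 (hfg x hx))]
  · rwa [map_fst_restrict_regionBetween hf hg hs]

theorem setIntegral_regionBetween_comp_fst (hf : Measurable f) (hg : Measurable g)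
    (hs : MeasurableSet s) (hfg : ∀ x ∈ s, f x ≤ g x) {e : α → E}
    (he : AEStronglyMeasurable e (μ.restrict s)) :
    ∫ z in regionBetween f g s, e z.1 ∂(μ.prod volume) =
      ∫ x in s, (g x - f x) • e x ∂μ := by
  have he' := he.mono_ac (withDensity_absolutelyContinuous _ fun x => ENNReal.ofReal (g x - f x))
  rw [← integral_map measurable_fst.aemeasurable, map_fst_restrict_regionBetween hf hg hs,
    integral_withDensity_eq_integral_toReal_smul (by fun_prop)
      (ae_of_all _ fun _ => ENNReal.ofReal_lt_top)]
  · refine setIntegral_congr_fun hs fun x hx => ?_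
    simp [ENNReal.toReal_ofReal (sub_nonneg.2 (hfg x hx))]
  · rwa [map_fst_restrict_regionBetween hf hg hs]

end RegionBetween

theorem Real.rpow_neg_smul_ofReal_cpow {x : ℝ} (hx : 0 < x) (b : ℝ) (w : ℂ) :
    x ^ (-b) • (x : ℂ) ^ w = (x : ℂ) ^ (w - b) := by
  rw [Complex.real_smul, Complex.ofReal_cpow hx.le, Complex.ofReal_neg,
    ← Complex.cpow_add _ _ (Complex.ofReal_ne_zero.2 hx.ne'), neg_add_eq_sub]

theorem Real.rpow_neg_natCast_add_one_rpow_neg {a : ℝ} (ha : 0 < a) (m : ℕ) (t : ℝ) :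
    (a ^ (-((m : ℝ) + 1))) ^ (-t) = (a ^ t) ^ (m + 1) := by
  rw [← Real.rpow_mul ha.le, ← Real.rpow_natCast, ← Real.rpow_mul ha.le]
  push_cast
  ring_nf

theorem Complex.ofReal_rpow_neg_natCast_add_one_cpow_neg {a : ℝ} (ha : 0 < a) (m : ℕ)
    (u : ℂ) :
    ((a ^ (-((m : ℝ) + 1)) : ℝ) : ℂ) ^ (-u) = ((a : ℂ) ^ u) ^ (m + 1) := by
  rw [← Complex.cpow_mul_ofReal_nonneg ha.le, ← Complex.cpow_nat_mul]
  push_cast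
  ring_nf

theorem Real.two_mul_rpow_lt_one {a t : ℝ} (ha0 : 0 < a) (ha1 : a < 1)
    (ht : Real.log 2 / Real.log (1 / a) < t) : 2 * a ^ t < 1 := by
  have hlog : 0 < Real.log (1 / a) := Real.log_pos (one_lt_one_div ha0 ha1)
  rw [div_lt_iff₀ hlog, one_div, Real.log_inv, mul_neg, lt_neg_iff_add_neg] at ht
  rw [← Real.log_neg_iff (by positivity), Real.log_mul two_ne_zero (by positivity),
    Real.log_rpow ha0]
  linarith

theorem hasSum_two_pow_mul_pow_succ {𝕜 : Type*} [NormedField 𝕜] [CompleteSpace 𝕜]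
    {q : 𝕜} (hq : ‖2 * q‖ < 1) :
    HasSum (fun m : ℕ => 2 ^ m * q ^ (m + 1)) (q / (1 - 2 * q)) := by
  have h := (hasSum_geometric_of_norm_lt_one hq).mul_left q
  rw [← div_eq_mul_inv] at h
  exact h.congr_fun fun m => by ring

def strip (A b c : ℝ) : Set (ℝ × ℝ) :=
  regionBetween (fun _ => c) (fun x => c + x ^ (-b)) (Ioi A)

section Strip

variable {A b : ℝ} (c : ℝ)

theorem measurableSet_strip : MeasurableSet (strip A b c) :=
  measurableSet_regionBetween measurable_const (by fun_prop) measurableSet_Ioi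

theorem integrableOn_strip_cpow (hA : 0 < A) {w : ℂ} (hw : w.re < b - 1) :
    IntegrableOn (fun z : ℝ × ℝ => (z.1 : ℂ) ^ w) (strip A b c) := by
  rw [strip, Measure.volume_eq_prod, integrableOn_regionBetween_comp_fst_iff
    (e := fun x : ℝ => (x : ℂ) ^ w) measurable_const (by fun_prop) measurableSet_Ioi
    (fun x hx => ?_) (Measurable.aestronglyMeasurable (by fun_prop))]
  · refine (integrableOn_Ioi_cpow_of_lt (a := w - b)
      (by rw [Complex.sub_re, Complex.ofReal_re]; linarith) hA).congr_fun
      (fun x hx => ?_) measurableSet_Ioi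
    simp only [add_sub_cancel_left, Real.rpow_neg_smul_ofReal_cpow (hA.trans hx)]
  · simpa using Real.rpow_nonneg (hA.trans hx).le _

theorem integral_strip_cpow (hA : 0 < A) {w : ℂ} (hw : w.re < b - 1) :
    ∫ z in strip A b c, (z.1 : ℂ) ^ w = -(A : ℂ) ^ (w - b + 1) / (w - b + 1) := by
  rw [strip, Measure.volume_eq_prod, setIntegral_regionBetween_comp_fst
    (e := fun x : ℝ => (x : ℂ) ^ w) measurable_const (by fun_prop) measurableSet_Ioi
    (fun x hx => ?_) (Measurable.aestronglyMeasurable (by fun_prop)),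
    ← integral_Ioi_cpow_of_lt (a := w - b)
      (by rw [Complex.sub_re, Complex.ofReal_re]; linarith) hA]
  · refine setIntegral_congr_fun measurableSet_Ioi fun x hx => ?_
    simp only [add_sub_cancel_left, Real.rpow_neg_smul_ofReal_cpow (hA.trans hx)]
  · simpa using Real.rpow_nonneg (hA.trans hx).le _

theorem integral_strip_norm_cpow (hA : 0 < A) {w : ℂ} (hw : w.re < b - 1) :
    ∫ z in strip A b c, ‖(z.1 : ℂ) ^ w‖ = -A ^ (w.re - b + 1) / (w.re - b + 1) := by
  rw [strip, Measure.volume_eq_prod, setIntegral_regionBetween_comp_fst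
    (e := fun x : ℝ => ‖(x : ℂ) ^ w‖) measurable_const (by fun_prop) measurableSet_Ioi
    (fun x hx => ?_) (Measurable.aestronglyMeasurable (by fun_prop)),
    ← integral_Ioi_rpow_of_lt (a := w.re - b) (by linarith) hA]
  · refine setIntegral_congr_fun measurableSet_Ioi fun x hx => ?_
    have hx : 0 < x := hA.trans hx
    simp only [add_sub_cancel_left, smul_eq_mul, Complex.norm_cpow_eq_rpow_re_of_pos hx,
      ← Real.rpow_add hx, neg_add_eq_sub]
  · simpa using Real.rpow_nonneg (hA.trans hx).le _

end Strip

section CantorLike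

variable (a b : ℝ) (c : ℕ → ℕ → ℝ)

/-- `cantorPiece a b c ⟨m, j⟩` is the paper's `P_{m+1, j}`. -/
def cantorPiece (i : Σ m : ℕ, Fin (2 ^ m)) : Set (ℝ × ℝ) :=
  strip (a ^ (-((i.1 : ℝ) + 1))) b (c i.1 i.2)

variable {a b c}

theorem measurableSet_cantorPiece (i : Σ m : ℕ, Fin (2 ^ m)) :
    MeasurableSet (cantorPiece a b c i) :=
  measurableSet_strip _

theorem integral_cantorPiece (ha : 0 < a) {s : ℂ} (hs : -(b + 1) < s.re)
    (i : Σ m : ℕ, Fin (2 ^ m)) :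
    ∫ z in cantorPiece a b c i, (z.1 : ℂ) ^ (-s - 2) =
      ((a : ℂ) ^ (s + b + 1)) ^ (i.1 + 1) / (s + b + 1) := by
  have hw : (-s - 2).re < b - 1 := by
    simp only [Complex.sub_re, Complex.neg_re, Complex.re_ofNat]; linarith
  rw [cantorPiece, integral_strip_cpow _ (Real.rpow_pos_of_pos ha _) hw,
    show -s - 2 - b + 1 = -(s + b + 1) by ring,
    Complex.ofReal_rpow_neg_natCast_add_one_cpow_neg ha, neg_div_neg_eq]

theorem integral_norm_cantorPiece (ha : 0 < a) {s : ℂ} (hs : -(b + 1) < s.re)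
    (i : Σ m : ℕ, Fin (2 ^ m)) :
    ∫ z in cantorPiece a b c i, ‖(z.1 : ℂ) ^ (-s - 2)‖ =
      (a ^ (s.re + b + 1)) ^ (i.1 + 1) / (s.re + b + 1) := by
  have hw : (-s - 2).re < b - 1 := by
    simp only [Complex.sub_re, Complex.neg_re, Complex.re_ofNat]; linarith
  rw [cantorPiece, integral_strip_norm_cpow _ (Real.rpow_pos_of_pos ha _) hw,
    show (-s - 2).re - b + 1 = -(s.re + b + 1) by
      simp only [Complex.sub_re, Complex.neg_re, Complex.re_ofNat]; ring,
    Real.rpow_neg_natCast_add_one_rpow_neg ha, neg_div_neg_eq]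

theorem integrableOn_iUnion_cantorPiece (ha0 : 0 < a) (ha1 : a < 1) {s : ℂ}
    (hs : Real.log 2 / Real.log (1 / a) - (b + 1) < s.re) :
    IntegrableOn (fun z : ℝ × ℝ => (z.1 : ℂ) ^ (-s - 2)) (⋃ i, cantorPiece a b c i) := by
  have hdim : 0 < Real.log 2 / Real.log (1 / a) :=
    div_pos (Real.log_pos one_lt_two) (Real.log_pos (one_lt_one_div ha0 ha1))
  have hu : 0 < s.re + b + 1 := by linarith
  refine integrableOn_iUnion_of_summable_integral_norm (fun i => ?_) ?_
  · refine integrableOn_strip_cpow _ (Real.rpow_pos_of_pos ha0 _) ?_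
    simp only [Complex.sub_re, Complex.neg_re, Complex.re_ofNat]; linarith
  simp_rw [integral_norm_cantorPiece ha0 (show -(b + 1) < s.re by linarith)]
  refine (summable_sigma_of_nonneg fun i => div_nonneg (by positivity) hu.le).2
    ⟨fun m => .of_finite, ?_⟩
  have hq : ‖2 * a ^ (s.re + b + 1)‖ < 1 := by
    rw [Real.norm_of_nonneg (by positivity)]
    exact Real.two_mul_rpow_lt_one ha0 ha1 (by linarith)
  simpa [mul_div_assoc] using (hasSum_two_pow_mul_pow_succ hq).summable.div_const (s.re + b + 1)

theorem integral_iUnion_cantorPiece (ha0 : 0 < a) (ha1 : a < 1)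
    (hdisj : Pairwise (Disjoint on cantorPiece a b c)) {s : ℂ}
    (hs : Real.log 2 / Real.log (1 / a) - (b + 1) < s.re) :
    ∫ z in ⋃ i, cantorPiece a b c i, (z.1 : ℂ) ^ (-s - 2) =
      1 / ((s + b + 1) * ((a : ℂ) ^ (-(s + b + 1)) - 2)) := by
  have hdim : 0 < Real.log 2 / Real.log (1 / a) :=
    div_pos (Real.log_pos one_lt_two) (Real.log_pos (one_lt_one_div ha0 ha1))
  have hq : ‖2 * (a : ℂ) ^ (s + b + 1)‖ < 1 := by
    rw [norm_mul, Complex.norm_cpow_eq_rpow_re_of_pos ha0]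
    simpa using Real.two_mul_rpow_lt_one ha0 ha1 (t := s.re + b + 1) (by linarith)
  have hsum := hasSum_integral_iUnion measurableSet_cantorPiece hdisj
    (integrableOn_iUnion_cantorPiece ha0 ha1 hs)
  simp_rw [integral_cantorPiece ha0 (show -(b + 1) < s.re by linarith)] at hsum
  have hlevel := hsum.sigma fun m => hasSum_fintype _
  simp only [Finset.sum_const, Finset.card_univ, Fintype.card_fin, nsmul_eq_mul] at hlevel
  rw [hlevel.unique (((hasSum_two_pow_mul_pow_succ hq).div_const (s + b + 1)).congr_fun
    fun m => by push_cast; ring), Complex.cpow_neg]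
  have hq0 : (a : ℂ) ^ (s + b + 1) ≠ 0 := by simp [Complex.cpow_eq_zero_iff, ha0.ne']
  have hu0 : s + b + 1 ≠ 0 := Complex.ne_zero_of_re_pos <| by
    simp only [Complex.add_re, Complex.ofReal_re, Complex.one_re]; linarith
  have hq1 : 1 - 2 * (a : ℂ) ^ (s + b + 1) ≠ 0 :=
    sub_ne_zero.2 fun h => by rw [← h, norm_one] at hq; exact lt_irrefl _ hq
  field_simp

end CantorLike

theorem stmt_19_general (a b : ℝ) (ha0 : 0 < a) (ha : a < 1 / 2)
    (hb : 1 + Real.log 2 / Real.log (1 / a) < b)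
    (c : ℕ → ℕ → ℝ)
    (P : ℕ → ℕ → Set (EuclideanSpace ℝ (Fin 2)))
    (hP : ∀ m j : ℕ, P m j =
      {p : EuclideanSpace ℝ (Fin 2) |
        a ^ (-((m : ℝ) + 1)) < p 0 ∧ c m j < p 1 ∧ p 1 < c m j + (p 0) ^ (-b)})
    (hdisj : ∀ m j m' j' : ℕ, j < 2 ^ m → j' < 2 ^ m' → (m, j) ≠ (m', j') →
      Disjoint (P m j) (P m' j'))
    (Ω : Set (EuclideanSpace ℝ (Fin 2)))
    (hΩ : Ω = ⋃ m : ℕ, ⋃ j : ℕ, ⋃ (_ : j < 2 ^ m), P m j) :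
    volume Ω < ⊤ ∧
    ∀ s : ℂ, Real.log 2 / Real.log (1 / a) - (b + 1) < s.re →
      ∫ p in Ω, ((p 0 : ℝ) : ℂ) ^ (-s - 2) =
        1 / ((s + (b : ℂ) + 1) * (((a : ℝ) : ℂ) ^ (-(s + (b : ℂ) + 1)) - 2)) := by
  have ha1 : a < 1 := by linarith
  let E : EuclideanSpace ℝ (Fin 2) ≃ᵐ ℝ × ℝ :=
    (MeasurableEquiv.toLp 2 (Fin 2 → ℝ)).symm.trans MeasurableEquiv.finTwoArrow
  have hE : MeasurePreserving E := (volume_preserving_finTwoArrow ℝ).comp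
    (EuclideanSpace.volume_preserving_symm_measurableEquiv_toLp (Fin 2))
  have hPE (i : Σ m : ℕ, Fin (2 ^ m)) : P i.1 i.2 = E ⁻¹' cantorPiece a b c i := by
    rw [hP]; rfl
  have hΩE : Ω = E ⁻¹' ⋃ i, cantorPiece a b c i := by
    simp_rw [hΩ, preimage_iUnion, ← hPE]
    ext p
    simp only [mem_iUnion]
    exact ⟨fun ⟨m, j, hj, hp⟩ => ⟨⟨m, j, hj⟩, hp⟩,
      fun ⟨i, hp⟩ => ⟨i.1, i.2, i.2.2, hp⟩⟩
  have hdisj' : Pairwise (Disjoint on cantorPiece a b c) := by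
    rintro ⟨m, j⟩ ⟨m', j'⟩ hne
    refine Disjoint.of_preimage E.surjective ?_
    rw [← hPE, ← hPE]
    refine hdisj m j m' j' j.2 j'.2 fun h => hne ?_
    obtain ⟨rfl, h⟩ := Prod.mk.inj h
    rw [Fin.ext h]
  refine ⟨?_, fun s hs => ?_⟩
  · have h1 := integrableOn_iUnion_cantorPiece (b := b) (c := c) ha0 ha1 (s := -2)
      (by rw [show (-2 : ℂ).re = -2 by norm_num]; linarith)
    simp only [neg_neg, sub_self, Complex.cpow_zero] at h1
    rw [hΩE, hE.measure_preimage
      (MeasurableSet.iUnion measurableSet_cantorPiece).nullMeasurableSet]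
    simpa using h1
  · rw [hΩE, ← integral_iUnion_cantorPiece ha0 ha1 hdisj' hs]
    exact hE.setIntegral_preimage_emb E.measurableEmbedding (fun z => (z.1 : ℂ) ^ (-s - 2)) _

/-- Let `a ∈ (0,1/2)`, `b > 1 + log 2/log(1/a)`, and for `m ≥ 1`,
`0 ≤ j < 2^{m-1}` let `P_{m,j} = {(x,y) : x > a^{-m}, c(m,j) < y < c(m,j) + x^{-b}}` with
`0 ≤ c(m,j)`, `c(m,j) + a^{mb} ≤ 1`, the `P_{m,j}` pairwise disjoint, and
`Ω = ⋃ P_{m,j}` (the Cantor-like set `Ω_∞^{(a,b)}`). Then `|Ω| < ∞` and for every `s ∈ ℂ`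
with `Re s > log 2/log(1/a) - (b+1)`,
`∫_Ω x^{-s-2} d(x,y) = 1/((s+b+1)·(a^{-(s+b+1)} - 2))`.
(Here the index `m : ℕ` corresponds to the paper's `m+1`, so `j` ranges over `j < 2^m`.) -/
theorem stmt_19 (a b : ℝ) (ha0 : 0 < a) (ha : a < 1 / 2)
    (hb : 1 + Real.log 2 / Real.log (1 / a) < b)
    (c : ℕ → ℕ → ℝ)
    (P : ℕ → ℕ → Set (EuclideanSpace ℝ (Fin 2)))
    (hP : ∀ m j : ℕ, P m j =
      {p : EuclideanSpace ℝ (Fin 2) |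
        a ^ (-((m : ℝ) + 1)) < p 0 ∧ c m j < p 1 ∧ p 1 < c m j + (p 0) ^ (-b)})
    (hc0 : ∀ m j : ℕ, j < 2 ^ m → 0 ≤ c m j)
    (hc1 : ∀ m j : ℕ, j < 2 ^ m → c m j + a ^ (((m : ℝ) + 1) * b) ≤ 1)
    (hdisj : ∀ m j m' j' : ℕ, j < 2 ^ m → j' < 2 ^ m' → (m, j) ≠ (m', j') →
      Disjoint (P m j) (P m' j'))
    (Ω : Set (EuclideanSpace ℝ (Fin 2)))
    (hΩ : Ω = ⋃ m : ℕ, ⋃ j : ℕ, ⋃ (_ : j < 2 ^ m), P m j) :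
    volume Ω < ⊤ ∧
    ∀ s : ℂ, Real.log 2 / Real.log (1 / a) - (b + 1) < s.re →
      ∫ p in Ω, ((p 0 : ℝ) : ℂ) ^ (-s - 2) =
        1 / ((s + (b : ℂ) + 1) * (((a : ℝ) : ℂ) ^ (-(s + (b : ℂ) + 1)) - 2)) :=
  stmt_19_general a b ha0 ha hb c P hP hdisj Ω hΩ
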